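/- Under the NPSEM with treatment decomposition for the DAG A → A', A → A'', A' → M, A'' → Y, M → Y: if {Y(a'', m) : a'', m}, {M(a') : a'}, and A are mutually independent, consistency holds, and positivity holds, then E[Y(A' = a', A'' = a'')] = Σ_m E[Y | A = a'', M = m] · P(M = m | A = a'), where the observed data satisfy A' = A'' = A. -/

import Mathlib

open MeasureTheory ProbabilityTheory

/-- Index type for the family of counterfactuals `{Y(a'',m)} ∪ {M(a')} ∪ {A}`. -/
def MedIndex (𝓜 : Type) : Type := (Bool × 𝓜) ⊕ Bool ⊕ Unit

/-- Codomain of each member of the counterfactual family. -/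
def MedCodomain (𝓜 : Type) : MedIndex 𝓜 → Type
  | Sum.inl _ => ℝ
  | Sum.inr (Sum.inl _) => 𝓜
  | Sum.inr (Sum.inr _) => Bool

/-- The family of counterfactual random variables. -/
def medFamily {Ω : Type*} {𝓜 : Type} (Y : Bool → 𝓜 → Ω → ℝ) (M : Bool → Ω → 𝓜)
    (A : Ω → Bool) : ∀ i : MedIndex 𝓜, Ω → MedCodomain 𝓜 i
  | Sum.inl am => Y am.1 am.2
  | Sum.inr (Sum.inl a) => M a
  | Sum.inr (Sum.inr _) => A

/-- The measurable-space structure on each codomain. -/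
def medMS (𝓜 : Type) [m𝓜 : MeasurableSpace 𝓜] :
    ∀ i : MedIndex 𝓜, MeasurableSpace (MedCodomain 𝓜 i)
  | Sum.inl _ => inferInstanceAs (MeasurableSpace ℝ)
  | Sum.inr (Sum.inl _) => m𝓜
  | Sum.inr (Sum.inr _) => inferInstanceAs (MeasurableSpace Bool)

/-! Split `E[Y(a'', M(a'))]` over the finitely many values `m` of `M(a')`; since
`Y(a'', m) ⟂ M(a')`, the piece on `{M(a') = m}` is `E[Y(a'', m)] P(M(a') = m)`. On the
observed side, consistency turns `Yobs` into `Y(a'', m)` and `{Mobs = m}` into `{M(a'') = m}` on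
`{A = a''}`, and `Y(a'', m) ⟂ (A, M(a''))` makes conditioning on that event harmless; likewise
`A ⟂ M(a')` gives `P(Mobs = m | A = a') = P(M(a') = m)`. -/

namespace ProbabilityTheory

variable {Ω β : Type*} [MeasurableSpace Ω] {μ : Measure Ω} [MeasurableSpace β]
  {X : Ω → ℝ} {Z : Ω → β} {t : Set β}

lemma IndepFun.setIntegral_preimage (h : IndepFun X Z μ)
    (hX : AEStronglyMeasurable X μ) (hZ : Measurable Z) (ht : MeasurableSet t) :
    ∫ ω in Z ⁻¹' t, X ω ∂μ = (∫ ω, X ω ∂μ) * μ.real (Z ⁻¹' t) := by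
  have hind : Measurable (t.indicator (1 : β → ℝ)) := measurable_one.indicator ht
  calc ∫ ω in Z ⁻¹' t, X ω ∂μ = ∫ ω, X ω * t.indicator 1 (Z ω) ∂μ := by
        rw [← integral_indicator (hZ ht)]
        congr 1 with ω
        by_cases hω : Z ω ∈ t <;> simp [hω]
    _ = (∫ ω, X ω ∂μ) * ∫ ω, t.indicator 1 (Z ω) ∂μ :=
        (h.comp measurable_id hind).integral_fun_mul_eq_mul_integral hX
          (hind.comp hZ).aestronglyMeasurable
    _ = (∫ ω, X ω ∂μ) * μ.real (Z ⁻¹' t) := by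
        simp_rw [← Set.indicator_comp_right, Pi.one_comp, integral_indicator_one (hZ ht)]

lemma IndepFun.integral_cond_preimage [IsFiniteMeasure μ] (h : IndepFun X Z μ)
    (hX : AEStronglyMeasurable X μ) (hZ : Measurable Z) (ht : MeasurableSet t)
    (hZt : μ (Z ⁻¹' t) ≠ 0) :
    ∫ ω, X ω ∂μ[|Z ⁻¹' t] = ∫ ω, X ω ∂μ := by
  rw [cond, integral_smul_measure, h.setIntegral_preimage hX hZ ht, ENNReal.toReal_inv,
    measureReal_def, smul_eq_mul, mul_comm, mul_assoc,
    mul_inv_cancel₀ (ENNReal.toReal_ne_zero.2 ⟨hZt, measure_ne_top μ _⟩), mul_one]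

lemma IndepFun.cond_preimage_apply [IsFiniteMeasure μ] {γ : Type*} [MeasurableSpace γ]
    {W : Ω → γ} {s : Set γ} (h : IndepFun W Z μ) (hW : Measurable W) (hs : MeasurableSet s)
    (ht : MeasurableSet t) (hWs : μ (W ⁻¹' s) ≠ 0) :
    μ[Z ⁻¹' t | W ⁻¹' s] = μ (Z ⁻¹' t) := by
  rw [cond_apply (hW hs), h.measure_inter_preimage_eq_mul _ _ hs ht, ← mul_assoc,
    ENNReal.inv_mul_cancel hWs (measure_ne_top μ _), one_mul]

end ProbabilityTheory

namespace MeasureTheory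

variable {Ω ι E : Type*} [MeasurableSpace Ω] {μ : Measure Ω} [Fintype ι] [MeasurableSpace ι]
  [MeasurableSingletonClass ι] [NormedAddCommGroup E] [NormedSpace ℝ E]

lemma integral_eval_comp_eq_sum_setIntegral {Y : ι → Ω → E} {I : Ω → ι}
    (hY : ∀ i, Integrable (Y i) μ) (hI : Measurable I) :
    ∫ ω, Y (I ω) ω ∂μ = ∑ i, ∫ ω in I ⁻¹' {i}, Y i ω ∂μ := by
  have hfiber (i : ι) : MeasurableSet (I ⁻¹' {i}) := hI (measurableSet_singleton i)
  have hsplit : (fun ω => Y (I ω) ω) = fun ω => ∑ i, (I ⁻¹' {i}).indicator (Y i) ω := by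
    ext ω
    classical
    simp only [Set.indicator_apply, Set.mem_preimage, Set.mem_singleton_iff, Finset.sum_ite_eq,
      Finset.mem_univ, if_true]
  rw [hsplit, integral_finsetSum _ fun i _ => (hY i).indicator (hfiber i)]
  simp_rw [integral_indicator (hfiber _)]

end MeasureTheory

section Mediation

variable {Ω : Type*} [MeasurableSpace Ω] {μ : Measure Ω} {𝓜 : Type} [MeasurableSpace 𝓜]
  {Y : Bool → 𝓜 → Ω → ℝ} {M : Bool → Ω → 𝓜} {A : Ω → Bool}

lemma indepFun_outcome_mediator (hindep : iIndepFun (m := medMS 𝓜) (medFamily Y M A) μ)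
    (a a' : Bool) (m : 𝓜) : IndepFun (Y a m) (M a') μ :=
  hindep.indepFun (i := .inl (a, m)) (j := .inr (.inl a')) Sum.inl_ne_inr

lemma indepFun_treatment_mediator (hindep : iIndepFun (m := medMS 𝓜) (medFamily Y M A) μ)
    (a : Bool) : IndepFun A (M a) μ :=
  hindep.indepFun (i := .inr (.inr ())) (j := .inr (.inl a)) nofun

lemma indepFun_outcome_treatment_mediator
    (hindep : iIndepFun (m := medMS 𝓜) (medFamily Y M A) μ)
    (hY : ∀ a m, AEMeasurable (Y a m) μ) (hM : ∀ a, Measurable (M a)) (hA : Measurable A)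
    (a : Bool) (m : 𝓜) : IndepFun (Y a m) (fun ω => (A ω, M a ω)) μ := by
  have hfamily (i : MedIndex 𝓜) : @AEMeasurable _ _ (medMS 𝓜 i) _ (medFamily Y M A i) μ := by
    rcases i with ⟨a, m⟩ | a | ⟨⟩
    exacts [hY a m, (hM a).aemeasurable, hA.aemeasurable]
  exact (hindep.indepFun_prodMk₀ hfamily (.inr (.inr ())) (.inr (.inl a)) (.inl (a, m))
    Sum.inr_ne_inl Sum.inr_ne_inl).symm

end Mediation

section Observed

variable {Ω : Type*} [MeasurableSpace Ω] {μ : Measure Ω} [IsFiniteMeasure μ] {𝓜 : Type}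
  [MeasurableSpace 𝓜] [MeasurableSingletonClass 𝓜]
  {Y : Bool → 𝓜 → Ω → ℝ} {M : Bool → Ω → 𝓜} {A : Ω → Bool}
  {Mobs : Ω → 𝓜} {Yobs : Ω → ℝ}

lemma integral_observed_outcome_cond_eq
    (hindep : iIndepFun (m := medMS 𝓜) (medFamily Y M A) μ)
    (hY : ∀ a m, Integrable (Y a m) μ) (hM : ∀ a, Measurable (M a)) (hA : Measurable A)
    (hMcons : ∀ ω, Mobs ω = M (A ω) ω) (hYcons : ∀ ω, Yobs ω = Y (A ω) (Mobs ω) ω)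
    {a : Bool} {m : 𝓜} (hpos : μ {ω | A ω = a ∧ Mobs ω = m} ≠ 0) :
    ∫ ω, Yobs ω ∂μ[|{ω | A ω = a ∧ Mobs ω = m}] = ∫ ω, Y a m ω ∂μ := by
  have hZ : Measurable fun ω => (A ω, M a ω) := hA.prodMk (hM a)
  have hS : {ω | A ω = a ∧ Mobs ω = m} = (fun ω => (A ω, M a ω)) ⁻¹' {(a, m)} := by
    ext ω
    simp +contextual [hMcons]
  rw [hS] at hpos ⊢
  calc ∫ ω, Yobs ω ∂μ[|(fun ω => (A ω, M a ω)) ⁻¹' {(a, m)}]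
      = ∫ ω, Y a m ω ∂μ[|(fun ω => (A ω, M a ω)) ⁻¹' {(a, m)}] :=
        integral_congr_ae <| ae_cond_of_forall_mem (hZ (measurableSet_singleton _))
          fun ω hω => by simp_all
    _ = ∫ ω, Y a m ω ∂μ :=
        (indepFun_outcome_treatment_mediator hindep (fun a m => (hY a m).aemeasurable) hM hA a m
          ).integral_cond_preimage (hY a m).1 hZ (measurableSet_singleton _) hpos

lemma cond_observed_mediator_eq (hindep : iIndepFun (m := medMS 𝓜) (medFamily Y M A) μ)
    (hA : Measurable A) (hMcons : ∀ ω, Mobs ω = M (A ω) ω)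
    {a : Bool} (hpos : μ {ω | A ω = a} ≠ 0) (m : 𝓜) :
    μ[{ω | Mobs ω = m} | {ω | A ω = a}] = μ (M a ⁻¹' {m}) := by
  calc μ[{ω | Mobs ω = m} | {ω | A ω = a}] = μ[M a ⁻¹' {m} | A ⁻¹' {a}] :=
        measure_congr <| ae_cond_of_forall_mem (hA (measurableSet_singleton a)) fun ω hω => by
          change (Mobs ω = m) = (M a ω = m)
          rw [hMcons, show A ω = a from hω]
    _ = μ (M a ⁻¹' {m}) :=
        (indepFun_treatment_mediator hindep a).cond_preimage_apply hA (measurableSet_singleton a)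
          (measurableSet_singleton m) hpos

end Observed

theorem split_treatment_mediation_formula_general
    {Ω : Type*} [MeasurableSpace Ω] (μ : Measure Ω) [IsProbabilityMeasure μ]
    {𝓜 : Type} [Fintype 𝓜] [MeasurableSpace 𝓜] [MeasurableSingletonClass 𝓜]
    (Y : Bool → 𝓜 → Ω → ℝ) (M : Bool → Ω → 𝓜) (A : Ω → Bool)
    (hmM : ∀ a, Measurable (M a)) (hmA : Measurable A)
    (hint : ∀ a m, Integrable (Y a m) μ)
    (hindep : iIndepFun (m := medMS 𝓜) (medFamily Y M A) μ)
    (Mobs : Ω → 𝓜) (Yobs : Ω → ℝ)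
    (hMcons : ∀ ω, Mobs ω = M (A ω) ω)
    (hYcons : ∀ ω, Yobs ω = Y (A ω) (Mobs ω) ω)
    (hpos : ∀ (a : Bool) (m : 𝓜), 0 < μ {ω | A ω = a ∧ Mobs ω = m})
    (a' a'' : Bool) :
    (∫ ω, Y a'' (M a' ω) ω ∂μ) =
      ∑ m : 𝓜,
        (∫ ω, Yobs ω ∂(μ[|{ω | A ω = a'' ∧ Mobs ω = m}])) *
        (μ[|{ω | A ω = a'}] {ω | Mobs ω = m}).toReal := by
  have hposA : μ {ω | A ω = a'} ≠ 0 := by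
    obtain ⟨ω⟩ := nonempty_of_isProbabilityMeasure μ
    exact (hpos a' (Mobs ω)).trans_le (measure_mono fun _ h => h.1) |>.ne'
  rw [integral_eval_comp_eq_sum_setIntegral (hint a'') (hmM a')]
  refine Finset.sum_congr rfl fun m _ => ?_
  rw [(indepFun_outcome_mediator hindep a'' a' m).setIntegral_preimage (hint a'' m).1 (hmM a')
      (measurableSet_singleton m),
    integral_observed_outcome_cond_eq hindep hint hmM hmA hMcons hYcons (hpos a'' m).ne',
    cond_observed_mediator_eq hindep hmA hMcons hposA, measureReal_def]

/-- Under the NPSEM with treatment decomposition for the DAG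
`A → A', A → A'', A' → M, A'' → Y, M → Y`, with the counterfactuals
`{Y(a'',m)}`, `{M(a')}` and `A` mutually independent, consistency, and positivity,
`E[Y(A'=a', A''=a'')] = Σ_m E[Y | A=a'', M=m] · P(M=m | A=a')`, where
`Y(a',a'') = Y(a'', M(a'))` and in the observed data `A' = A'' = A`. -/
theorem split_treatment_mediation_formula
    {Ω : Type*} [MeasurableSpace Ω] (μ : Measure Ω) [IsProbabilityMeasure μ]
    {𝓜 : Type} [Fintype 𝓜] [MeasurableSpace 𝓜] [MeasurableSingletonClass 𝓜]
    (Y : Bool → 𝓜 → Ω → ℝ) (M : Bool → Ω → 𝓜) (A : Ω → Bool)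
    (hmY : ∀ a m, Measurable (Y a m)) (hmM : ∀ a, Measurable (M a)) (hmA : Measurable A)
    (hint : ∀ a m, Integrable (Y a m) μ)
    (hint' : ∀ a a' : Bool, Integrable (fun ω => Y a (M a' ω) ω) μ)
    (hindep : iIndepFun (m := medMS 𝓜) (medFamily Y M A) μ)
    (Mobs : Ω → 𝓜) (Yobs : Ω → ℝ)
    (hMcons : ∀ ω, Mobs ω = M (A ω) ω)
    (hYcons : ∀ ω, Yobs ω = Y (A ω) (Mobs ω) ω)
    (hpos : ∀ (a : Bool) (m : 𝓜), 0 < μ {ω | A ω = a ∧ Mobs ω = m})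
    (a' a'' : Bool) :
    (∫ ω, Y a'' (M a' ω) ω ∂μ) =
      ∑ m : 𝓜,
        (∫ ω, Yobs ω ∂(μ[|{ω | A ω = a'' ∧ Mobs ω = m}])) *
        (μ[|{ω | A ω = a'}] {ω | Mobs ω = m}).toReal :=
  split_treatment_mediation_formula_general μ Y M A hmM hmA hint hindep Mobs Yobs hMcons hYcons hpos
    a' a''
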